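/- arXiv:1404.7412 — 2 statements merged into one kernel-verified Lean document; each statement's English description precedes it below -/
import Mathlib

section
/- Let v, v', w, w' ∈ ℝ^{2p} satisfy wᵀv = 0, w'ᵀv' = 0, w'ᵀv = 0, wᵀv' = 0, and ω(v,v') = 0. Then the group commutator satisfies u(v,w)·u(v',w')·u(v,w)⁻¹·u(v',w')⁻¹ = u_Z(v, ω(w,w')·v'). -/
open Matrix

/-- Index type for `2p × 2p` matrices. -/
abbrev Idx (p : ℕ) := Fin p ⊕ Fin p

/-- The standard symplectic matrix `J = [[0, I], [-I, 0]]`. -/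
def Jmat (p : ℕ) : Matrix (Idx p) (Idx p) ℝ := Matrix.fromBlocks 0 1 (-1) 0

/-- The standard symplectic form `ω(v,w) = vᵀJw`. -/
def omegaForm (p : ℕ) (v w : Idx p → ℝ) : ℝ := v ⬝ᵥ (Jmat p *ᵥ w)

/-- `u(v,w)`: the matrix of the linear map `z ↦ z + (wᵀz)v + (vᵀJz)(Jw)`. -/
def uMat (p : ℕ) (v w : Idx p → ℝ) : Matrix (Idx p) (Idx p) ℝ :=
  1 + vecMulVec v w + vecMulVec (Jmat p *ᵥ w) (v ᵥ* Jmat p)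

/-- `u_Z(v,w)`: the matrix of the linear map `z ↦ z + ω(v,z)w + ω(w,z)v`. -/
def uZMat (p : ℕ) (v w : Idx p → ℝ) : Matrix (Idx p) (Idx p) ℝ :=
  1 + vecMulVec w (v ᵥ* Jmat p) + vecMulVec v (w ᵥ* Jmat p)

lemma Jmat_eq_neg_J (p : ℕ) : Jmat p = -(Matrix.J (Fin p) ℝ) := by
  ext (i|i) (j|j) <;> simp [Jmat, Matrix.J, Matrix.fromBlocks]

lemma Jmat_sq (p : ℕ) : Jmat p * Jmat p = -1 := by
  rw [Jmat_eq_neg_J, Matrix.neg_mul, Matrix.mul_neg, neg_neg, Matrix.J_squared]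

lemma Jmat_transpose (p : ℕ) : (Jmat p)ᵀ = -(Jmat p) := by
  rw [Jmat_eq_neg_J, Matrix.transpose_neg, Matrix.J_transpose, neg_neg]

/-- Antisymmetry of the symplectic form. -/
lemma omega_antisymm (p : ℕ) (a b : Idx p → ℝ) :
    a ⬝ᵥ (Jmat p *ᵥ b) = -(b ⬝ᵥ (Jmat p *ᵥ a)) := by
  rw [Matrix.dotProduct_mulVec, ← Matrix.mulVec_transpose, Jmat_transpose,
    Matrix.neg_mulVec, neg_dotProduct, dotProduct_comm]

lemma rowJ_dot (p : ℕ) (a b : Idx p → ℝ) :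
    (a ᵥ* Jmat p) ⬝ᵥ b = a ⬝ᵥ (Jmat p *ᵥ b) :=
  (Matrix.dotProduct_mulVec a (Jmat p) b).symm

lemma dot_JJ (p : ℕ) (a b : Idx p → ℝ) :
    a ⬝ᵥ (Jmat p *ᵥ (Jmat p *ᵥ b)) = -(a ⬝ᵥ b) := by
  rw [Matrix.mulVec_mulVec, Jmat_sq, Matrix.neg_mulVec, Matrix.one_mulVec,
    dotProduct_neg]

lemma vmv_mul {p : ℕ} (a b c d : Idx p → ℝ) :
    vecMulVec a b * vecMulVec c d = (b ⬝ᵥ c) • vecMulVec a d := by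
  ext i j
  simp only [Matrix.mul_apply, Matrix.vecMulVec_apply, Matrix.smul_apply, smul_eq_mul,
    dotProduct, Finset.sum_mul]
  exact Finset.sum_congr rfl fun k _ => by ring

lemma neg_vecMulVec {p : ℕ} (a b : Idx p → ℝ) :
    vecMulVec (-a) b = -vecMulVec a b := by
  ext i j; simp [Matrix.vecMulVec_apply]

lemma vecMulVec_negr {p : ℕ} (a b : Idx p → ℝ) :
    vecMulVec a (-b) = -vecMulVec a b := by
  ext i j; simp [Matrix.vecMulVec_apply]

lemma vecMulVec_smulr {p : ℕ} (c : ℝ) (a b : Idx p → ℝ) :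
    vecMulVec a (c • b) = c • vecMulVec a b := by
  ext i j; simp [Matrix.vecMulVec_apply]; ring

lemma smul_vecMulVec_left {p : ℕ} (c : ℝ) (a b : Idx p → ℝ) :
    vecMulVec (c • a) b = c • vecMulVec a b := by
  ext i j; simp [Matrix.vecMulVec_apply]; ring

/-- under the stated orthogonality hypotheses, the group commutator
`u(v,w)·u(v',w')·u(v,w)⁻¹·u(v',w')⁻¹` equals `u_Z(v, ω(w,w')·v')`. -/
theorem commutator_uMat (p : ℕ) (hp : 1 ≤ p) (v v' w w' : Idx p → ℝ)
    (h1 : w ⬝ᵥ v = 0) (h2 : w' ⬝ᵥ v' = 0) (h3 : w' ⬝ᵥ v = 0) (h4 : w ⬝ᵥ v' = 0)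
    (h5 : omegaForm p v v' = 0) :
    uMat p v w * uMat p v' w' * (uMat p v w)⁻¹ * (uMat p v' w')⁻¹ =
      uZMat p v (omegaForm p w w' • v') := by
  set c : ℝ := omegaForm p w w' with hc
  -- the 16 junction dot products
  have e1 : w ⬝ᵥ v = 0 := h1
  have e2 : w ⬝ᵥ (Jmat p *ᵥ w) = 0 := by
    have := omega_antisymm p w w; linarith
  have e3 : w ⬝ᵥ v' = 0 := h4
  have e4 : w ⬝ᵥ (Jmat p *ᵥ w') = c := rfl
  have e5 : (v ᵥ* Jmat p) ⬝ᵥ v = 0 := by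
    rw [rowJ_dot]; have := omega_antisymm p v v; linarith
  have e6 : (v ᵥ* Jmat p) ⬝ᵥ (Jmat p *ᵥ w) = 0 := by
    rw [rowJ_dot, dot_JJ, dotProduct_comm, h1, neg_zero]
  have e7 : (v ᵥ* Jmat p) ⬝ᵥ v' = 0 := by rw [rowJ_dot]; exact h5
  have e8 : (v ᵥ* Jmat p) ⬝ᵥ (Jmat p *ᵥ w') = 0 := by
    rw [rowJ_dot, dot_JJ, dotProduct_comm, h3, neg_zero]
  have e9 : w' ⬝ᵥ v = 0 := h3
  have e10 : w' ⬝ᵥ (Jmat p *ᵥ w) = -c := by rw [omega_antisymm]; rfl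
  have e11 : w' ⬝ᵥ v' = 0 := h2
  have e12 : w' ⬝ᵥ (Jmat p *ᵥ w') = 0 := by
    have := omega_antisymm p w' w'; linarith
  have e13 : (v' ᵥ* Jmat p) ⬝ᵥ v = 0 := by
    rw [rowJ_dot, omega_antisymm]
    have : v ⬝ᵥ (Jmat p *ᵥ v') = 0 := h5
    rw [this, neg_zero]
  have e14 : (v' ᵥ* Jmat p) ⬝ᵥ (Jmat p *ᵥ w) = 0 := by
    rw [rowJ_dot, dot_JJ, dotProduct_comm, h4, neg_zero]
  have e15 : (v' ᵥ* Jmat p) ⬝ᵥ v' = 0 := by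
    rw [rowJ_dot]; have := omega_antisymm p v' v'; linarith
  have e16 : (v' ᵥ* Jmat p) ⬝ᵥ (Jmat p *ᵥ w') = 0 := by
    rw [rowJ_dot, dot_JJ, dotProduct_comm, h2, neg_zero]
  -- inverses
  have hInv : (uMat p v w)⁻¹ = uMat p (-v) w := by
    refine Matrix.inv_eq_right_inv ?_
    simp only [uMat, neg_vecMulVec, Matrix.neg_vecMul, vecMulVec_negr, mul_add, add_mul,
      one_mul, mul_one, mul_neg, neg_mul, vmv_mul, e1, e2, e5, e6, zero_smul, neg_zero,
      add_zero, smul_zero]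
    abel
  have hInv' : (uMat p v' w')⁻¹ = uMat p (-v') w' := by
    refine Matrix.inv_eq_right_inv ?_
    simp only [uMat, neg_vecMulVec, Matrix.neg_vecMul, vecMulVec_negr, mul_add, add_mul,
      one_mul, mul_one, mul_neg, neg_mul, vmv_mul, e11, e12, e15, e16, zero_smul, neg_zero,
      add_zero, smul_zero]
    abel
  rw [hInv, hInv']
  simp only [uMat, uZMat, neg_vecMulVec, Matrix.neg_vecMul, vecMulVec_negr,
    smul_vecMulVec_left, Matrix.smul_vecMul, vecMulVec_smulr,
    mul_add, add_mul, one_mul, mul_one, mul_neg, neg_mul, neg_neg,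
    Matrix.smul_mul, Matrix.mul_smul, vmv_mul, smul_smul,
    e1, e2, e3, e4, e5, e6, e7, e8, e9, e10, e11, e12, e13, e14, e15, e16,
    zero_smul, neg_zero, add_zero, zero_add, smul_zero, smul_neg, neg_smul,
    mul_zero, zero_mul]
  abel
end

section
/- Let S, T ⊆ H be disjoint with S isotropic and T symplectic, and let P_T = Σ_{t∈T} z_t z_tᵀ be the coordinate projection onto ℝ^T. Define Ab(M) = (M − I)·P_T for M ∈ N_{S,T}(ℝ). Then Ab is a group homomorphism from N_{S,T}(ℝ) to the additive group of 2p×2p real matrices — i.e. Ab(M·M') = Ab(M) + Ab(M') for all M, M' ∈ N_{S,T}(ℝ) — and its kernel is exactly Z_S(ℝ): for M ∈ N_{S,T}(ℝ), Ab(M) = 0 if and only if M ∈ Z_S(ℝ). -/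
open Matrix

/-- The standard basis vector `z_h` of `ℝ^{2p}`. -/
def zvec (p : ℕ) (h : Idx p) : Idx p → ℝ := Pi.single h 1

/-- The real symplectic group `Sp(2p;ℝ) = {M | MᵀJM = J}`. -/
def SpR (p : ℕ) : Set (Matrix (Idx p) (Idx p) ℝ) :=
  {M | Mᵀ * Jmat p * M = Jmat p}

/-- `ℝ^A`: the span of the standard basis vectors `z_a`, `a ∈ A`. -/
def RSpan (p : ℕ) (A : Finset (Idx p)) : Submodule ℝ (Idx p → ℝ) :=
  Submodule.span ℝ {v | ∃ a ∈ A, v = zvec p a}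

/-- `S ⊆ H` is isotropic if it contains no pair `{h, −h}`. -/
def IsIsotropic {p : ℕ} (S : Finset (Idx p)) : Prop := ∀ h ∈ S, Sum.swap h ∉ S

/-- `T ⊆ H` is symplectic if it is closed under negation. -/
def IsSymplecticSet {p : ℕ} (T : Finset (Idx p)) : Prop := ∀ h ∈ T, Sum.swap h ∈ T

/-- The unipotent radical `N_{S,T}(ℝ)`. -/
def NR (p : ℕ) (S T : Finset (Idx p)) : Set (Matrix (Idx p) (Idx p) ℝ) :=
  {M | M ∈ SpR p ∧
    (∀ s ∈ S, M *ᵥ zvec p s = zvec p s) ∧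
    (∀ h : Idx p, h ∉ S → h ∉ S.image Sum.swap → h ∉ T → M *ᵥ zvec p h = zvec p h) ∧
    (∀ t ∈ T, (M - 1) *ᵥ zvec p t ∈ RSpan p (S ∪ S.image Sum.swap))}

/-- `Z_S(ℝ) = {M ∈ Sp(2p;ℝ) : M z_h = z_h for h ∉ −S, (M−I)z_{−s} ∈ ℝ^S for s ∈ S}`. -/
def ZS (p : ℕ) (S : Finset (Idx p)) : Set (Matrix (Idx p) (Idx p) ℝ) :=
  {M | M ∈ SpR p ∧
    (∀ h : Idx p, h ∉ S.image Sum.swap → M *ᵥ zvec p h = zvec p h) ∧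
    (∀ s ∈ S, (M - 1) *ᵥ zvec p (Sum.swap s) ∈ RSpan p S)}

/-- The coordinate projection `P_T = Σ_{t∈T} z_t z_tᵀ` onto `ℝ^T`. -/
def projT (p : ℕ) (T : Finset (Idx p)) : Matrix (Idx p) (Idx p) ℝ :=
  ∑ t ∈ T, Matrix.single t t (1 : ℝ)

/-- `Ab(M) = (M − I)·P_T`. -/
def AbMap (p : ℕ) (T : Finset (Idx p)) (M : Matrix (Idx p) (Idx p) ℝ) :
    Matrix (Idx p) (Idx p) ℝ :=
  (M - 1) * projT p T

/-!
For `M ∈ N_{S,T}`, the matrix `M - 1` vanishes on `ℝ^S` and maps `ℝ^T` into `ℝ^S`. Coordinates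
outside `S ∪ -S` vanish by definition of `N_{S,T}`; the coordinate `k` with `-k ∈ S` vanishes
because a symplectic `M` fixing `z_{-k}` has the `k`-th row of the identity, as
`ω(z_{-k}, M v) = ω(M z_{-k}, M v) = ω(z_{-k}, v)` and `ω(z_{-k}, ·)` is `±` the `k`-th coordinate.
Hence `(M - 1)(M' - 1) P_T = 0`, which is exactly the failure of `Ab` to be additive.
If `Ab M = 0` then `M` fixes `ℝ^T`, hence every `z_h` with `h ∉ -S`, and the same row argument puts
`(M - 1) z_{-s}` into `ℝ^S`. Conversely `T` misses `-S` because `T = -T` and `S ∩ T = ∅`.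
-/

lemma Finset.mem_image_swap_iff {α β : Type*} [DecidableEq α] [DecidableEq β]
    {S : Finset (α ⊕ β)} {k : β ⊕ α} :
    k ∈ S.image Sum.swap ↔ k.swap ∈ S := by
  rw [Finset.mem_image]
  constructor
  · rintro ⟨a, ha, rfl⟩
    rwa [Sum.swap_swap]
  · exact fun h => ⟨k.swap, h, Sum.swap_swap k⟩

section

variable {p : ℕ}

lemma mulVec_zvec_apply (M : Matrix (Idx p) (Idx p) ℝ) (h i : Idx p) :
    (M *ᵥ zvec p h) i = M i h := by
  simp [zvec]

lemma mulVec_zvec_eq_self_iff {M : Matrix (Idx p) (Idx p) ℝ} {h : Idx p} :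
    M *ᵥ zvec p h = zvec p h ↔ ∀ i, (M - 1) i h = 0 := by
  simp [funext_iff, sub_eq_zero, zvec, Pi.single_apply, one_apply]

lemma mem_RSpan_iff {A : Finset (Idx p)} {v : Idx p → ℝ} :
    v ∈ RSpan p A ↔ ∀ k ∉ A, v k = 0 := by
  constructor
  · intro hv k hk
    induction hv using Submodule.span_induction with
    | mem x hx =>
      obtain ⟨a, ha, rfl⟩ := hx
      exact Pi.single_eq_of_ne (ne_of_mem_of_not_mem ha hk).symm 1
    | zero => rfl
    | add x y _ _ hx hy => simp [hx, hy]
    | smul c x _ hx => simp [hx]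
  · intro hv
    rw [← Finset.univ_sum_single v]
    refine Submodule.sum_mem _ fun k _ => ?_
    by_cases hk : k ∈ A
    · have : Pi.single k (v k) = v k • zvec p k := by
        rw [zvec, ← Pi.single_smul', smul_eq_mul, mul_one]
      rw [this]
      exact Submodule.smul_mem _ _ (Submodule.subset_span ⟨k, hk, rfl⟩)
    · simp [hv k hk]

lemma Jmat_mulVec_zvec_swap (k : Idx p) :
    ∃ ε : ℝ, ε ≠ 0 ∧ Jmat p *ᵥ zvec p k.swap = ε • zvec p k := by
  rcases k with k | k
  · refine ⟨1, one_ne_zero, ?_⟩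
    ext (i | i) <;> simp [Jmat, zvec, Pi.single_apply, one_apply]
  · refine ⟨-1, by norm_num, ?_⟩
    ext (i | i) <;> simp [Jmat, zvec, Pi.single_apply, one_apply, apply_ite]

lemma SpR.sub_one_apply_eq_zero_of_mulVec_zvec_swap {M : Matrix (Idx p) (Idx p) ℝ} (hM : M ∈ SpR p)
    {k : Idx p} (hk : M *ᵥ zvec p k.swap = zvec p k.swap) (j : Idx p) : (M - 1) k j = 0 := by
  obtain ⟨ε, hε, hJ⟩ := Jmat_mulVec_zvec_swap k
  have hrow : Mᵀ *ᵥ zvec p k = zvec p k := by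
    have := congrArg (· *ᵥ zvec p k.swap) hM
    simp only [← mulVec_mulVec, hk, hJ, mulVec_smul] at this
    exact smul_right_injective _ hε this
  have := congrFun hrow j
  rw [mulVec_zvec_apply, transpose_apply] at this
  simp [this, zvec, Pi.single_apply, one_apply, eq_comm]

lemma projT_eq_diagonal (T : Finset (Idx p)) :
    projT p T = diagonal fun j => if j ∈ T then 1 else 0 := by
  rw [projT, ← sum_single_eq_diagonal, ← Finset.sum_subset (Finset.subset_univ T)]
  · exact Finset.sum_congr rfl fun t ht => by rw [if_pos ht]
  · intro t _ ht
    rw [if_neg ht, single_zero]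

lemma AbMap_apply (T : Finset (Idx p)) (M : Matrix (Idx p) (Idx p) ℝ) (i j : Idx p) :
    AbMap p T M i j = if j ∈ T then (M - 1) i j else 0 := by
  simp [AbMap, projT_eq_diagonal]

lemma AbMap_eq_zero_iff {T : Finset (Idx p)} {M : Matrix (Idx p) (Idx p) ℝ} :
    AbMap p T M = 0 ↔ ∀ t ∈ T, M *ᵥ zvec p t = zvec p t := by
  simp only [← Matrix.ext_iff, AbMap_apply, Matrix.zero_apply, ite_eq_right_iff,
    mulVec_zvec_eq_self_iff]
  exact ⟨fun h t ht i => h i t ht, fun h i j hj => h j hj i⟩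

lemma AbMap_mul (T : Finset (Idx p)) (M M' : Matrix (Idx p) (Idx p) ℝ) :
    AbMap p T (M * M') = AbMap p T M + AbMap p T M' + (M - 1) * AbMap p T M' := by
  simp only [AbMap, ← Matrix.mul_assoc, ← Matrix.add_mul]
  congr 1
  noncomm_ring

namespace NR

variable {S T : Finset (Idx p)} {M : Matrix (Idx p) (Idx p) ℝ}

lemma sub_one_apply_of_mem (hM : M ∈ NR p S T) {s : Idx p} (hs : s ∈ S) (i : Idx p) :
    (M - 1) i s = 0 :=
  mulVec_zvec_eq_self_iff.1 (hM.2.1 s hs) i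

lemma AbMap_apply_of_notMem (hM : M ∈ NR p S T) {k : Idx p} (hk : k ∉ S) (j : Idx p) :
    AbMap p T M k j = 0 := by
  obtain ⟨hSp, hfixS, -, hspan⟩ := hM
  rw [AbMap_apply]
  split_ifs with hj
  · by_cases hks : k.swap ∈ S
    · exact SpR.sub_one_apply_eq_zero_of_mulVec_zvec_swap hSp (hfixS _ hks) j
    · have hk' : k ∉ S ∪ S.image Sum.swap := by
        simp only [Finset.mem_union, Finset.mem_image_swap_iff, not_or]
        exact ⟨hk, hks⟩
      simpa only [mulVec_zvec_apply] using mem_RSpan_iff.1 (hspan j hj) k hk'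
  · rfl

lemma AbMap_mul_eq_add (hM : M ∈ NR p S T) {M' : Matrix (Idx p) (Idx p) ℝ}
    (hM' : M' ∈ NR p S T) : AbMap p T (M * M') = AbMap p T M + AbMap p T M' := by
  rw [AbMap_mul, add_eq_left]
  ext i j
  rw [mul_apply]
  refine Finset.sum_eq_zero fun k _ => ?_
  by_cases hk : k ∈ S
  · rw [sub_one_apply_of_mem hM hk, zero_mul]
  · rw [AbMap_apply_of_notMem hM' hk, mul_zero]

lemma mem_ZS_of_AbMap_eq_zero (hM : M ∈ NR p S T) (hAb : AbMap p T M = 0) : M ∈ ZS p S := by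
  obtain ⟨hSp, hfixS, hfix, -⟩ := hM
  have hfixes : ∀ h ∉ S.image Sum.swap, M *ᵥ zvec p h = zvec p h := by
    intro h hh
    by_cases hS : h ∈ S
    · exact hfixS h hS
    by_cases hT : h ∈ T
    · exact AbMap_eq_zero_iff.1 hAb h hT
    · exact hfix h hS hh hT
  refine ⟨hSp, hfixes, fun s _ => mem_RSpan_iff.2 fun k hk => ?_⟩
  rw [mulVec_zvec_apply]
  exact SpR.sub_one_apply_eq_zero_of_mulVec_zvec_swap hSp
    (hfixes _ (by rwa [Finset.mem_image_swap_iff, Sum.swap_swap])) _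

end NR

lemma ZS.AbMap_eq_zero {S T : Finset (Idx p)} (hdisj : Disjoint S T) (hT : IsSymplecticSet T)
    {M : Matrix (Idx p) (Idx p) ℝ} (hM : M ∈ ZS p S) : AbMap p T M = 0 :=
  AbMap_eq_zero_iff.2 fun t ht => hM.2.1 t fun htS =>
    Finset.disjoint_left.1 hdisj (Finset.mem_image_swap_iff.1 htS) (hT t ht)

end

theorem AbMap_hom_ker_general (p : ℕ) (S T : Finset (Idx p))
    (hdisj : Disjoint S T) (hT : IsSymplecticSet T) :
    (∀ M ∈ NR p S T, ∀ M' ∈ NR p S T,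
      AbMap p T (M * M') = AbMap p T M + AbMap p T M') ∧
    (∀ M ∈ NR p S T, (AbMap p T M = 0 ↔ M ∈ ZS p S)) :=
  ⟨fun _ hM _ hM' => NR.AbMap_mul_eq_add hM hM',
    fun _ hM => ⟨NR.mem_ZS_of_AbMap_eq_zero hM, ZS.AbMap_eq_zero hdisj hT⟩⟩

/-- `Ab` is a homomorphism from `N_{S,T}(ℝ)` to the additive group of
matrices, with kernel exactly `Z_S(ℝ)`. -/
theorem AbMap_hom_ker (p : ℕ) (hp : 1 ≤ p) (S T : Finset (Idx p))
    (hdisj : Disjoint S T) (hS : IsIsotropic S) (hT : IsSymplecticSet T) :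
    (∀ M ∈ NR p S T, ∀ M' ∈ NR p S T,
      AbMap p T (M * M') = AbMap p T M + AbMap p T M') ∧
    (∀ M ∈ NR p S T, (AbMap p T M = 0 ↔ M ∈ ZS p S)) :=
  AbMap_hom_ker_general p S T hdisj hT
end
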